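/- arXiv:2307.14531 — 4 statements merged into one kernel-verified Lean document; each statement's English description precedes it below -/
import Mathlib

section
/- Let Φ ∈ ℝ^{n×p} with K₀ = Φ Φᵀ symmetric positive definite, let S be a symmetric positive definite n×n matrix and y ∈ ℝⁿ. For γ > 0 let w*_γ = Φᵀ(K₀ + γS⁻¹)⁻¹y be the minimizer of the preconditioned ridge objective (1/2)(Φw − y)ᵀS(Φw − y) + (γ/2)‖w‖², and let w**_γ = Φᵀ(K₀ + γI)⁻¹y be the minimizer of the standard ridge objective (1/2)‖Φw − y‖² + (γ/2)‖w‖². Then lim_{γ→0⁺} w*_γ = lim_{γ→0⁺} w**_γ = Φᵀ K₀⁻¹ y; in particular the two limits coincide and are independent of S. -/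
set_option maxHeartbeats 1000000

open Matrix Filter Topology

lemma aux_tendsto {n p : ℕ}
    (Φ : Matrix (Fin n) (Fin p) ℝ) (K₀ : Matrix (Fin n) (Fin n) ℝ)
    (hKpd : K₀.PosDef) (M : Matrix (Fin n) (Fin n) ℝ) (y : Fin n → ℝ) :
    Tendsto (fun γ : ℝ => Φᵀ.mulVec ((K₀ + γ • M)⁻¹.mulVec y)) (𝓝[>] (0 : ℝ))
      (𝓝 (Φᵀ.mulVec (K₀⁻¹.mulVec y))) := by
  have h1 : Continuous (fun γ : ℝ => K₀ + γ • M) := by continuity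
  have hinv : ContinuousAt Inv.inv K₀ := by
    apply continuousAt_matrix_inv
    exact NormedRing.inverse_continuousAt (Units.mk0 K₀.det hKpd.det_pos.ne')
  have h2 : ContinuousAt (fun γ : ℝ => Φᵀ.mulVec ((K₀ + γ • M)⁻¹.mulVec y)) 0 := by
    have h3 : ContinuousAt (fun γ : ℝ => (K₀ + γ • M)⁻¹) 0 := by
      have hK : ContinuousAt Inv.inv (K₀ + (0:ℝ) • M) := by simpa using hinv
      exact ContinuousAt.comp (g := Inv.inv) hK h1.continuousAt
    have h4 : Continuous (fun A : Matrix (Fin n) (Fin n) ℝ => Φᵀ.mulVec (A.mulVec y)) :=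
      continuous_const.matrix_mulVec (continuous_id.matrix_mulVec continuous_const)
    exact h4.continuousAt.comp h3
  have := h2.continuousWithinAt (s := Set.Ioi (0:ℝ))
  simpa using this.tendsto

/-- The ridgeless limits of the preconditioned ridge minimizer
`w*_γ = Φᵀ(K₀ + γS⁻¹)⁻¹y` and of the standard ridge minimizer
`w**_γ = Φᵀ(K₀ + γI)⁻¹y` both exist as `γ → 0⁺` and equal `Φᵀ K₀⁻¹ y`;
in particular they coincide and are independent of `S`. -/
theorem ridgeless_limits_coincide
    {n p : ℕ}
    (Φ : Matrix (Fin n) (Fin p) ℝ) (K₀ : Matrix (Fin n) (Fin n) ℝ)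
    (hK₀ : K₀ = Φ * Φᵀ) (hKpd : K₀.PosDef)
    (S : Matrix (Fin n) (Fin n) ℝ) (hS : S.PosDef)
    (y : Fin n → ℝ)
    (wstar wsstar : ℝ → (Fin p → ℝ))
    (hwstar : ∀ γ : ℝ, wstar γ = Φᵀ.mulVec ((K₀ + γ • S⁻¹)⁻¹.mulVec y))
    (hwsstar : ∀ γ : ℝ, wsstar γ = Φᵀ.mulVec ((K₀ + γ • (1 : Matrix (Fin n) (Fin n) ℝ))⁻¹.mulVec y)) :
    Tendsto wstar (𝓝[>] (0 : ℝ)) (𝓝 (Φᵀ.mulVec (K₀⁻¹.mulVec y))) ∧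
      Tendsto wsstar (𝓝[>] (0 : ℝ)) (𝓝 (Φᵀ.mulVec (K₀⁻¹.mulVec y))) := by
  constructor
  · have := aux_tendsto Φ K₀ hKpd S⁻¹ y
    simpa [funext hwstar] using this
  · have := aux_tendsto Φ K₀ hKpd 1 y
    simpa [funext hwsstar] using this
end

section
/- Let K be a symmetric n×n real matrix with an orthonormal eigenbasis v₁, …, vₙ and corresponding eigenvalues λ₁ ≥ … ≥ λₙ > 0, let 1 ≤ k ≤ n, and let g : ℝ → ℝ satisfy g(λᵢ) > 0 for all 1 ≤ i ≤ k. Then the matrix S = I − Σ_{i=1}^{k} (1 − g(λᵢ)/λᵢ) vᵢ vᵢᵀ is symmetric positive definite. -/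
/-!
Writing `V` for the matrix with rows `vᵢ`, orthonormality gives `VᵀV = 1 = Σᵢ vᵢvᵢᵀ`, so
`S = Vᵀ diag(d) V` with `dᵢ = g(λᵢ)/λᵢ` for `i < k` and `dᵢ = 1` otherwise. Every `dᵢ` is positive
and `V` is invertible, hence `S` is positive definite.
-/

open Matrix

namespace Matrix

variable {m n R : Type*} [Fintype m] [DecidableEq m]

theorem transpose_mul_diagonal_mul_eq_sum_smul_vecMulVec [CommSemiring R]
    (v : m → n → R) (c : m → R) :
    (of v)ᵀ * diagonal c * of v = ∑ i, c i • vecMulVec (v i) (v i) := by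
  ext a b
  simp only [mul_apply, transpose_apply, diagonal_apply, mul_ite, mul_zero,
    Finset.sum_ite_eq', Finset.mem_univ, if_true, of_apply, sum_apply, smul_apply, vecMulVec_apply,
    smul_eq_mul]
  exact Finset.sum_congr rfl fun i _ => by ring

theorem one_sub_sum_smul_vecMulVec_eq [Fintype n] [DecidableEq n] [CommRing R] {v : m → n → R}
    (hv : (of v)ᵀ * of v = 1) (c : m → R) :
    1 - ∑ i, c i • vecMulVec (v i) (v i) = (of v)ᵀ * diagonal (1 - c) * of v := by
  have hdiag : diagonal (1 - c) = 1 - diagonal c := by rw [← diagonal_one, diagonal_sub]; rfl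
  rw [← transpose_mul_diagonal_mul_eq_sum_smul_vecMulVec, hdiag, Matrix.mul_sub,
    Matrix.sub_mul, Matrix.mul_one, hv]

theorem posDef_transpose_mul_diagonal_mul [Fintype n] [DecidableEq n] {W : Matrix m n ℝ}
    (hW : Wᵀ * W = 1) {d : m → ℝ} (hd : ∀ i, 0 < d i) : (Wᵀ * diagonal d * W).PosDef := by
  have hinj : Function.Injective W.mulVec := fun x y hxy => by
    simpa only [mulVec_mulVec, hW, one_mulVec] using congrArg (Wᵀ *ᵥ ·) hxy
  simpa only [conjTranspose_eq_transpose_of_trivial] using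
    (posDef_diagonal_iff.mpr hd).conjTranspose_mul_mul_same hinj

end Matrix

theorem msk_preconditioner_posDef_general
    {n : ℕ} (v : Fin n → (Fin n → ℝ)) (lam : Fin n → ℝ)
    (horth : ∀ i j : Fin n, v i ⬝ᵥ v j = if i = j then 1 else 0)
    (hpos : ∀ i : Fin n, 0 < lam i)
    (k : ℕ)
    (g : ℝ → ℝ) (hg : ∀ i : Fin n, (i : ℕ) < k → 0 < g (lam i))
    (S : Matrix (Fin n) (Fin n) ℝ)
    (hS : S = 1 - ∑ i ∈ Finset.univ.filter (fun i : Fin n => (i : ℕ) < k),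
        (1 - g (lam i) / lam i) • vecMulVec (v i) (v i)) :
    S.PosDef := by
  have hW : (of v)ᵀ * of v = 1 := mul_eq_one_comm.mp (by ext i j; exact horth i j)
  set c : Fin n → ℝ := fun i => if (i : ℕ) < k then 1 - g (lam i) / lam i else 0
  have hS' : S = 1 - ∑ i, c i • vecMulVec (v i) (v i) := by
    simp only [hS, Finset.sum_filter, c, ite_smul, zero_smul]
  rw [hS', one_sub_sum_smul_vecMulVec_eq hW]
  refine posDef_transpose_mul_diagonal_mul hW fun i => ?_
  by_cases hi : (i : ℕ) < k
  · simpa [c, hi] using div_pos (hg i hi) (hpos i)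
  · simp [c, hi]

/-- Let `K` be symmetric with orthonormal eigenbasis `v i` and
eigenvalues `λ 0 ≥ … ≥ λ (n-1) > 0`, let `1 ≤ k ≤ n` and let `g` satisfy
`g (λ i) > 0` for the top `k` indices. Then the MSK preconditioner
`S = I − Σ_{i < k} (1 − g(λ i)/λ i) vᵢ vᵢᵀ` is symmetric positive definite. -/
theorem msk_preconditioner_posDef
    {n : ℕ} (K : Matrix (Fin n) (Fin n) ℝ) (hKsymm : K.IsSymm)
    (v : Fin n → (Fin n → ℝ)) (lam : Fin n → ℝ)
    (horth : ∀ i j : Fin n, v i ⬝ᵥ v j = if i = j then 1 else 0)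
    (heig : ∀ i : Fin n, K.mulVec (v i) = lam i • v i)
    (hdesc : ∀ i j : Fin n, i ≤ j → lam j ≤ lam i)
    (hpos : ∀ i : Fin n, 0 < lam i)
    (k : ℕ) (hk1 : 1 ≤ k) (hkn : k ≤ n)
    (g : ℝ → ℝ) (hg : ∀ i : Fin n, (i : ℕ) < k → 0 < g (lam i))
    (S : Matrix (Fin n) (Fin n) ℝ)
    (hS : S = 1 - ∑ i ∈ Finset.univ.filter (fun i : Fin n => (i : ℕ) < k),
        (1 - g (lam i) / lam i) • vecMulVec (v i) (v i)) :
    S.PosDef :=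
  msk_preconditioner_posDef_general v lam horth hpos k g hg S hS
end

section
/- Let K be a symmetric n×n real matrix with an orthonormal eigenbasis v₁, …, vₙ and eigenvalues λ₁ ≥ … ≥ λₙ > 0, let 1 ≤ k ≤ n, let g : ℝ → ℝ satisfy g(λᵢ) > 0 for 1 ≤ i ≤ k, and let S = I − Σ_{i=1}^{k}(1 − g(λᵢ)/λᵢ) vᵢ vᵢᵀ. Then (KS) vᵢ = g(λᵢ) vᵢ for every 1 ≤ i ≤ k and (KS) vⱼ = λⱼ vⱼ for every k < j ≤ n; moreover KS is symmetric, and its eigenvalues are g(λ₁), …, g(λ_k), λ_{k+1}, …, λₙ. -/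
open Matrix

/-
With `c i = 1 - g(λᵢ)/λᵢ` for `i < k` and `c i = 0` otherwise, `S = 1 - Σ cᵢ vᵢvᵢᵀ`.
Since `K (vᵢvᵢᵀ) = (K vᵢ) vᵢᵀ = λᵢ vᵢvᵢᵀ`, we get `KS = K - Σ cᵢλᵢ vᵢvᵢᵀ`, a difference of
symmetric matrices. By orthonormality, `(Σ cᵢλᵢ vᵢvᵢᵀ) vⱼ = cⱼλⱼ vⱼ`, so `KS vⱼ = (1 - cⱼ)λⱼ vⱼ`,
which is `g(λⱼ) vⱼ` for `j < k` and `λⱼ vⱼ` otherwise.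
-/

section
variable {ι n R : Type*} [CommRing R]

lemma isSymm_sum_smul_vecMulVec_self (s : Finset ι) (c : ι → R) (v : ι → n → R) :
    (∑ i ∈ s, c i • vecMulVec (v i) (v i)).IsSymm := by
  simp only [IsSymm, transpose_sum, transpose_smul, transpose_vecMulVec]

variable [Fintype n]

lemma sum_smul_vecMulVec_self_mulVec_of_orthonormal [DecidableEq ι] {v : ι → n → R}
    (horth : ∀ i j, v i ⬝ᵥ v j = if i = j then 1 else 0) (s : Finset ι) (c : ι → R) (j : ι) :
    (∑ i ∈ s, c i • vecMulVec (v i) (v i)) *ᵥ v j = (if j ∈ s then c j else 0) • v j := by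
  simp only [sum_mulVec, smul_mulVec, vecMulVec_mulVec, horth, op_smul_eq_smul, ite_smul,
    one_smul, zero_smul, smul_ite, smul_zero, Finset.sum_ite_eq']

lemma mul_vecMulVec_of_mulVec_eq_smul {K : Matrix n n R} {u : n → R} {μ : R}
    (h : K *ᵥ u = μ • u) (w : n → R) : K * vecMulVec u w = μ • vecMulVec u w := by
  rw [mul_vecMulVec, h, smul_vecMulVec]

lemma mul_one_sub_sum_smul_vecMulVec_self [DecidableEq n] {K : Matrix n n R} {v : ι → n → R}
    {lam : ι → R} (heig : ∀ i, K *ᵥ v i = lam i • v i) (s : Finset ι) (c : ι → R) :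
    K * (1 - ∑ i ∈ s, c i • vecMulVec (v i) (v i)) =
      K - ∑ i ∈ s, (c i * lam i) • vecMulVec (v i) (v i) := by
  simp only [Matrix.mul_sub, Matrix.mul_one, Finset.mul_sum, Matrix.mul_smul,
    mul_vecMulVec_of_mulVec_eq_smul (heig _), smul_smul]

end

theorem msk_modified_kernel_eigenpairs_general
    {n : ℕ} (K : Matrix (Fin n) (Fin n) ℝ) (hKsymm : K.IsSymm)
    (v : Fin n → (Fin n → ℝ)) (lam : Fin n → ℝ)
    (horth : ∀ i j : Fin n, v i ⬝ᵥ v j = if i = j then 1 else 0)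
    (heig : ∀ i : Fin n, K.mulVec (v i) = lam i • v i)
    (hpos : ∀ i : Fin n, 0 < lam i)
    (k : ℕ)
    (g : ℝ → ℝ)
    (S : Matrix (Fin n) (Fin n) ℝ)
    (hS : S = 1 - ∑ i ∈ Finset.univ.filter (fun i : Fin n => (i : ℕ) < k),
        (1 - g (lam i) / lam i) • vecMulVec (v i) (v i)) :
    (∀ i : Fin n, (i : ℕ) < k → (K * S).mulVec (v i) = g (lam i) • v i) ∧
      (∀ j : Fin n, k ≤ (j : ℕ) → (K * S).mulVec (v j) = lam j • v j) ∧
      (K * S).IsSymm := by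
  set s := Finset.univ.filter (fun i : Fin n => (i : ℕ) < k)
  have hKS :
      K * S = K - ∑ i ∈ s, ((1 - g (lam i) / lam i) * lam i) • vecMulVec (v i) (v i) := by
    rw [hS, mul_one_sub_sum_smul_vecMulVec_self heig]
  have hKSv (j : Fin n) : (K * S) *ᵥ v j =
      lam j • v j - (if j ∈ s then (1 - g (lam j) / lam j) * lam j else 0) • v j := by
    rw [hKS, sub_mulVec, heig, sum_smul_vecMulVec_self_mulVec_of_orthonormal horth]
  refine ⟨fun i hi => ?_, fun j hj => ?_, ?_⟩
  · have hlam : lam i ≠ 0 := (hpos i).ne'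
    rw [hKSv, if_pos (Finset.mem_filter.mpr ⟨Finset.mem_univ i, hi⟩), ← sub_smul]
    congr 1
    field_simp
    ring
  · rw [hKSv, if_neg (by simpa [s] using hj), zero_smul, sub_zero]
  · rw [hKS]
    exact hKsymm.sub (isSymm_sum_smul_vecMulVec_self _ _ _)

/-- With `S = I − Σ_{i<k}(1 − g(λᵢ)/λᵢ) vᵢ vᵢᵀ` built from the
orthonormal eigenbasis of `K`, the product `KS` satisfies `(KS) vᵢ = g(λᵢ) vᵢ`
for the top `k` indices and `(KS) vⱼ = λⱼ vⱼ` for the remaining ones; moreover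
`KS` is symmetric (so its eigenvalues are `g(λ₁), …, g(λ_k), λ_{k+1}, …, λₙ`). -/
theorem msk_modified_kernel_eigenpairs
    {n : ℕ} (K : Matrix (Fin n) (Fin n) ℝ) (hKsymm : K.IsSymm)
    (v : Fin n → (Fin n → ℝ)) (lam : Fin n → ℝ)
    (horth : ∀ i j : Fin n, v i ⬝ᵥ v j = if i = j then 1 else 0)
    (heig : ∀ i : Fin n, K.mulVec (v i) = lam i • v i)
    (hdesc : ∀ i j : Fin n, i ≤ j → lam j ≤ lam i)
    (hpos : ∀ i : Fin n, 0 < lam i)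
    (k : ℕ) (hk1 : 1 ≤ k) (hkn : k ≤ n)
    (g : ℝ → ℝ) (hg : ∀ i : Fin n, (i : ℕ) < k → 0 < g (lam i))
    (S : Matrix (Fin n) (Fin n) ℝ)
    (hS : S = 1 - ∑ i ∈ Finset.univ.filter (fun i : Fin n => (i : ℕ) < k),
        (1 - g (lam i) / lam i) • vecMulVec (v i) (v i)) :
    (∀ i : Fin n, (i : ℕ) < k → (K * S).mulVec (v i) = g (lam i) • v i) ∧
      (∀ j : Fin n, k ≤ (j : ℕ) → (K * S).mulVec (v j) = lam j • v j) ∧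
      (K * S).IsSymm :=
  msk_modified_kernel_eigenpairs_general K hKsymm v lam horth heig hpos k g S hS
end

section
/- Let K be a symmetric n×n real matrix with orthonormal eigenbasis v₁, …, vₙ and eigenvalues λ₁ ≥ … ≥ λₙ > 0, let 1 ≤ k < n, and define S = I − Σ_{i=1}^{k}(1 − λ_{k+1}/λᵢ) vᵢ vᵢᵀ (i.e., the modification function is g(λᵢ) = λ_{k+1} for i ≤ k). Set η = 2/(λ_{k+1} + λₙ) and ρ = (λ_{k+1} − λₙ)/(λ_{k+1} + λₙ) ∈ [0,1). Then for every y ∈ ℝⁿ and every nonnegative integer t, ‖(I − ηKS)ᵗ y‖₂ ≤ ρᵗ ‖y‖₂; in particular, for each i ≤ k+1, ‖(I − ηKS)ᵗ vᵢ‖₂ ≤ ρᵗ, with the contraction factor ρ independent of i. -/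
open Matrix

lemma aux_sum_mulVec {n : ℕ} {ι : Type*} (s : Finset ι) (A : ι → Matrix (Fin n) (Fin n) ℝ)
    (y : Fin n → ℝ) : (∑ i ∈ s, A i) *ᵥ y = ∑ i ∈ s, (A i) *ᵥ y := by
  ext l
  simp only [Matrix.mulVec, dotProduct, Matrix.sum_apply, Finset.sum_apply, Finset.sum_mul]
  rw [Finset.sum_comm]

lemma aux_vecMulVec_mulVec {n : ℕ} (u w x : Fin n → ℝ) :
    (vecMulVec u w) *ᵥ x = (w ⬝ᵥ x) • u := by
  ext i
  simp only [Matrix.mulVec, dotProduct, vecMulVec_apply, Pi.smul_apply, smul_eq_mul,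
    Finset.sum_mul]
  apply Finset.sum_congr rfl
  intros; ring

lemma aux_mulVec_sum {n : ℕ} {ι : Type*} (s : Finset ι) (A : Matrix (Fin n) (Fin n) ℝ)
    (f : ι → Fin n → ℝ) : A *ᵥ (∑ i ∈ s, f i) = ∑ i ∈ s, A *ᵥ f i := by
  exact map_sum A.mulVecLin f s

lemma aux_dot_sum {n : ℕ} (v : Fin n → (Fin n → ℝ))
    (horth : ∀ i j : Fin n, v i ⬝ᵥ v j = if i = j then 1 else 0)
    (d : Fin n → ℝ) :
    (∑ j, d j • v j) ⬝ᵥ (∑ j, d j • v j) = ∑ j, (d j)^2 := by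
  have key : ∀ j l : Fin n, ∑ i, (d j * v j i) * (d l * v l i) = d j * d l * (v j ⬝ᵥ v l) := by
    intro j l; rw [dotProduct, Finset.mul_sum]
    apply Finset.sum_congr rfl; intros; ring
  rw [dotProduct]
  simp only [Finset.sum_apply, Pi.smul_apply, smul_eq_mul, Finset.sum_mul, Finset.mul_sum]
  rw [Finset.sum_comm]
  refine Finset.sum_congr rfl fun j _ => ?_
  rw [Finset.sum_comm]
  simp_rw [key, horth]
  simp [sq]

lemma aux_complete {n : ℕ} (v : Fin n → (Fin n → ℝ))
    (horth : ∀ i j : Fin n, v i ⬝ᵥ v j = if i = j then 1 else 0)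
    (y : Fin n → ℝ) : y = ∑ j, (v j ⬝ᵥ y) • v j := by
  set V : Matrix (Fin n) (Fin n) ℝ := Matrix.of v with hV
  have hVV : V * Vᵀ = 1 := by
    ext i j
    rw [Matrix.mul_apply, Matrix.one_apply]
    simpa [dotProduct, hV] using horth i j
  have hVV' : Vᵀ * V = 1 := mul_eq_one_comm.mp hVV
  calc y = (Vᵀ * V) *ᵥ y := by rw [hVV', one_mulVec]
    _ = Vᵀ *ᵥ (V *ᵥ y) := (mulVec_mulVec y Vᵀ V).symm
    _ = ∑ j, (v j ⬝ᵥ y) • v j := by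
        ext i
        simp [Matrix.mulVec, dotProduct, hV, Finset.sum_apply, mul_comm]

/-- With the MSK preconditioner equalizing the top `k+1`
eigenvalues of `K` (modification function `g(λᵢ) = λ_{k+1}`; note `λ_{k+1}` is
`lam ⟨k, _⟩` in 0-based indexing and `λₙ` is `lam ⟨n-1, _⟩`), learning rate
`η = 2/(λ_{k+1} + λₙ)` and `ρ = (λ_{k+1} − λₙ)/(λ_{k+1} + λₙ)`, one has
`‖(I − ηKS)ᵗ y‖₂ ≤ ρᵗ ‖y‖₂` for all `y`, and in particular
`‖(I − ηKS)ᵗ vᵢ‖₂ ≤ ρᵗ` for each of the top `k+1` eigen-directions, with the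
contraction factor independent of `i`. -/
theorem msk_equalized_top_spectrum_fast_convergence
    {n : ℕ} (K : Matrix (Fin n) (Fin n) ℝ) (hKsymm : K.IsSymm)
    (v : Fin n → (Fin n → ℝ)) (lam : Fin n → ℝ)
    (horth : ∀ i j : Fin n, v i ⬝ᵥ v j = if i = j then 1 else 0)
    (heig : ∀ i : Fin n, K.mulVec (v i) = lam i • v i)
    (hdesc : ∀ i j : Fin n, i ≤ j → lam j ≤ lam i)
    (hpos : ∀ i : Fin n, 0 < lam i)
    (k : ℕ) (hk1 : 1 ≤ k) (hkn : k < n)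
    (S : Matrix (Fin n) (Fin n) ℝ)
    (hS : S = 1 - ∑ i ∈ Finset.univ.filter (fun i : Fin n => (i : ℕ) < k),
        (1 - lam ⟨k, hkn⟩ / lam i) • vecMulVec (v i) (v i))
    (η ρ : ℝ)
    (hη : η = 2 / (lam ⟨k, hkn⟩ + lam ⟨n - 1, by omega⟩))
    (hρ : ρ = (lam ⟨k, hkn⟩ - lam ⟨n - 1, by omega⟩) /
        (lam ⟨k, hkn⟩ + lam ⟨n - 1, by omega⟩)) :
    (0 ≤ ρ ∧ ρ < 1) ∧
    (∀ (y : Fin n → ℝ) (t : ℕ),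
      Real.sqrt ((((1 - η • (K * S)) ^ t).mulVec y) ⬝ᵥ (((1 - η • (K * S)) ^ t).mulVec y)) ≤
        ρ ^ t * Real.sqrt (y ⬝ᵥ y)) ∧
    (∀ (i : Fin n), (i : ℕ) < k + 1 → ∀ t : ℕ,
      Real.sqrt ((((1 - η • (K * S)) ^ t).mulVec (v i)) ⬝ᵥ
        (((1 - η • (K * S)) ^ t).mulVec (v i))) ≤ ρ ^ t) := by
  have hn1 : n - 1 < n := by omega
  set ik : Fin n := ⟨k, hkn⟩ with hik
  set inn : Fin n := ⟨n - 1, hn1⟩ with hinn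
  set a := lam ik with ha
  set b := lam inn with hb
  have hη' : η = 2 / (a + b) := hη
  have hρ' : ρ = (a - b) / (a + b) := hρ
  have hapos : 0 < a := hpos ik
  have hbpos : 0 < b := hpos inn
  have hab : 0 < a + b := by linarith
  have hba : b ≤ a := hdesc ik inn (by rw [Fin.le_def]; simp [hik, hinn]; omega)
  have hρ0 : 0 ≤ ρ := by rw [hρ']; exact div_nonneg (by linarith) hab.le
  have hρ1 : ρ < 1 := by rw [hρ', div_lt_one hab]; linarith
  -- eigenvalues of K * S
  set μ : Fin n → ℝ := fun j => if (j : ℕ) < k then a else lam j with hμ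
  have hμb : ∀ j, b ≤ μ j := by
    intro j
    by_cases h : (j : ℕ) < k
    · simp only [hμ, h, if_true]; exact hba
    · simp only [hμ, h, if_false]
      exact hdesc j inn (by rw [Fin.le_def]; simp [hinn]; omega)
  have hμa : ∀ j, μ j ≤ a := by
    intro j
    by_cases h : (j : ℕ) < k
    · simp [hμ, h]
    · simp only [hμ, h, if_false]
      exact hdesc ik j (by rw [Fin.le_def]; simp [hik]; omega)
  have hSv : ∀ j, S *ᵥ v j = (if (j : ℕ) < k then a / lam j else 1) • v j := by
    intro j
    rw [hS, sub_mulVec, one_mulVec, aux_sum_mulVec]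
    have hterm : ∀ i : Fin n, ((1 - a / lam i) • vecMulVec (v i) (v i)) *ᵥ v j
        = if i = j then (1 - a / lam i) • v i else 0 := by
      intro i
      rw [smul_mulVec, aux_vecMulVec_mulVec, horth]
      by_cases h : i = j <;> simp [h]
    simp_rw [hterm]
    rw [Finset.sum_ite_eq' (Finset.univ.filter (fun i : Fin n => (i : ℕ) < k)) j
      (fun i => (1 - a / lam i) • v i)]
    by_cases h : (j : ℕ) < k
    · simp only [Finset.mem_filter, Finset.mem_univ, true_and, h, if_true]
      ext i
      simp only [Pi.sub_apply, Pi.smul_apply, smul_eq_mul]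
      ring
    · simp [h]
  have hKSv : ∀ j, (K * S) *ᵥ v j = μ j • v j := by
    intro j
    rw [← mulVec_mulVec, hSv, mulVec_smul, heig, smul_smul]
    by_cases h : (j : ℕ) < k
    · simp only [h, if_true, hμ]
      rw [div_mul_cancel₀ a (hpos j).ne']
    · simp [hμ, h]
  set M : Matrix (Fin n) (Fin n) ℝ := 1 - η • (K * S) with hM
  set c : Fin n → ℝ := fun j => 1 - η * μ j with hc
  have hMv : ∀ j, M *ᵥ v j = c j • v j := by
    intro j
    rw [hM, sub_mulVec, one_mulVec, smul_mulVec, hKSv, smul_smul]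
    simp [hc, sub_smul]
  have hMt : ∀ (t : ℕ) (j : Fin n), (M ^ t) *ᵥ v j = (c j) ^ t • v j := by
    intro t
    induction t with
    | zero => intro j; simp
    | succ t ih =>
      intro j
      rw [pow_succ, ← mulVec_mulVec, hMv, mulVec_smul, ih, smul_smul, pow_succ, mul_comm]
  have hcρ : ∀ j, (c j) ^ 2 ≤ ρ ^ 2 := by
    intro j
    have hcdef : c j = (a + b - 2 * μ j) / (a + b) := by
      rw [hc, hη']; field_simp
    have hub : c j ≤ ρ := by
      rw [hcdef, hρ', div_le_div_iff₀ hab hab]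
      nlinarith [hμb j]
    have hlb : -ρ ≤ c j := by
      have hneg : -ρ = (b - a) / (a + b) := by rw [hρ']; ring
      rw [hneg, hcdef, div_le_div_iff₀ hab hab]
      nlinarith [hμa j]
    exact sq_le_sq' hlb hub
  -- main bound
  have main : ∀ (y : Fin n → ℝ) (t : ℕ),
      Real.sqrt (((M ^ t) *ᵥ y) ⬝ᵥ ((M ^ t) *ᵥ y)) ≤ ρ ^ t * Real.sqrt (y ⬝ᵥ y) := by
    intro y t
    set z : Fin n → ℝ := fun j => v j ⬝ᵥ y with hz
    have hy : y = ∑ j, z j • v j := aux_complete v horth y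
    have hMy : (M ^ t) *ᵥ y = ∑ j, (z j * c j ^ t) • v j := by
      conv_lhs => rw [hy]
      rw [aux_mulVec_sum]
      refine Finset.sum_congr rfl fun j _ => ?_
      rw [mulVec_smul, hMt, smul_smul]
    have hdot1 : ((M ^ t) *ᵥ y) ⬝ᵥ ((M ^ t) *ᵥ y) = ∑ j, (z j * c j ^ t) ^ 2 := by
      rw [hMy]; exact aux_dot_sum v horth _
    have hdot2 : y ⬝ᵥ y = ∑ j, (z j) ^ 2 := by
      have h := aux_dot_sum v horth z
      rw [← hy] at h
      exact h
    have hsum : ∑ j, (z j * c j ^ t) ^ 2 ≤ (ρ ^ t) ^ 2 * ∑ j, (z j) ^ 2 := by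
      rw [Finset.mul_sum]
      apply Finset.sum_le_sum
      intro j _
      have hcc : (c j ^ t) ^ 2 ≤ (ρ ^ t) ^ 2 := by
        calc (c j ^ t) ^ 2 = (c j ^ 2) ^ t := by rw [← pow_mul, mul_comm, pow_mul]
          _ ≤ (ρ ^ 2) ^ t := pow_le_pow_left₀ (sq_nonneg _) (hcρ j) t
          _ = (ρ ^ t) ^ 2 := by rw [← pow_mul, mul_comm, pow_mul]
      calc (z j * c j ^ t) ^ 2 = (c j ^ t) ^ 2 * (z j) ^ 2 := by ring
        _ ≤ (ρ ^ t) ^ 2 * (z j) ^ 2 :=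
            mul_le_mul_of_nonneg_right hcc (sq_nonneg _)
    rw [hdot1, hdot2]
    calc Real.sqrt (∑ j, (z j * c j ^ t) ^ 2)
        ≤ Real.sqrt ((ρ ^ t) ^ 2 * ∑ j, (z j) ^ 2) := Real.sqrt_le_sqrt hsum
      _ = ρ ^ t * Real.sqrt (∑ j, (z j) ^ 2) := by
          rw [Real.sqrt_mul (sq_nonneg _), Real.sqrt_sq (pow_nonneg hρ0 t)]
  refine ⟨⟨hρ0, hρ1⟩, main, ?_⟩
  intro i _ t
  have h := main (v i) t
  have h1 : v i ⬝ᵥ v i = 1 := by rw [horth i i]; simp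
  rwa [h1, Real.sqrt_one, mul_one] at h
end
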